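/- For the A(t) quantum random walk with 0 < t < 1/√3 and t ≠ 1/2, the polynomial H = 2(x−1)(x+1)(y²+1)z²t² − (−y−x+xy²+z²y−x²y+z²xy²−z²x+z²x²y)zt + (yz²−x)(xz²+y) has nonvanishing gradient at every point of the unit torus T₃ where H vanishes; hence 𝒱₁ is smooth. -/

import Mathlib

/-!
`H` is anti-palindromic, `x² y² z⁴ H(1/x, 1/y, 1/z) = -H(x, y, z)`, so on the torus the conjugates
of the critical equations are combinations of the equations themselves and the torus adds nothing
algebraically. Eliminating `x` and `y` from `H = ∂ₓH = ∂ᵧH = ∂_zH = 0` leaves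
`t³ z ((64t⁴ - 3) z⁴ - (15 - 56t²)) = 0`. For `|z| = 1` and `t ≠ 0` this forces
`|64t⁴ - 3| = |15 - 56t²|`, i.e. `(4t² - 1)(8t² + 9) = 0` or `(8t² - 3)(2t² - 1) = 0`, and neither
has a root `t` with `0 < t < 1/√3`, `t ≠ 1/2`.
-/

/-- The denominator polynomial of the A(t) quantum random walk (denominators cleared). -/
noncomputable def HA (t : ℝ) (x y z : ℂ) : ℂ :=
  2 * (x - 1) * (x + 1) * (y ^ 2 + 1) * z ^ 2 * (t : ℂ) ^ 2 -
    (-y - x + x * y ^ 2 + z ^ 2 * y - x ^ 2 * y + z ^ 2 * x * y ^ 2 - z ^ 2 * x +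
        z ^ 2 * x ^ 2 * y) * z * (t : ℂ) +
    (y * z ^ 2 - x) * (x * z ^ 2 + y)

section PartialDerivatives

variable (t : ℝ) (x y z : ℂ)

theorem hasDerivAt_HA_x :
    HasDerivAt (fun w => HA t w y z)
      (4 * x * (y ^ 2 + 1) * z ^ 2 * t ^ 2 -
        (-1 + y ^ 2 - 2 * x * y + z ^ 2 * y ^ 2 - z ^ 2 + 2 * z ^ 2 * x * y) * z * t +
        ((y * z ^ 2 - x) * z ^ 2 - (x * z ^ 2 + y))) x := by
  refine HasDerivAt.congr_deriv (by unfold HA; apply_rules (maxDepth := 200)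
      [HasDerivAt.pow, HasDerivAt.add, HasDerivAt.sub, HasDerivAt.mul, HasDerivAt.neg,
      hasDerivAt_id', hasDerivAt_const]) ?_
  ring

theorem hasDerivAt_HA_y :
    HasDerivAt (fun w => HA t x w z)
      (4 * (x ^ 2 - 1) * y * z ^ 2 * t ^ 2 -
        (-1 + 2 * x * y + z ^ 2 - x ^ 2 + 2 * z ^ 2 * x * y + z ^ 2 * x ^ 2) * z * t +
        (z ^ 2 * (x * z ^ 2 + y) + (y * z ^ 2 - x))) y := by
  refine HasDerivAt.congr_deriv (by unfold HA; apply_rules (maxDepth := 200)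
      [HasDerivAt.pow, HasDerivAt.add, HasDerivAt.sub, HasDerivAt.mul, HasDerivAt.neg,
      hasDerivAt_id', hasDerivAt_const]) ?_
  ring

theorem hasDerivAt_HA_z :
    HasDerivAt (fun w => HA t x y w)
      (4 * (x ^ 2 - 1) * (y ^ 2 + 1) * z * t ^ 2 -
        ((-y - x + x * y ^ 2 - x ^ 2 * y) + 3 * (y - x + x * y ^ 2 + x ^ 2 * y) * z ^ 2) * t +
        (2 * y * z * (x * z ^ 2 + y) + 2 * x * z * (y * z ^ 2 - x))) z := by
  refine HasDerivAt.congr_deriv (by unfold HA; apply_rules (maxDepth := 200)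
      [HasDerivAt.pow, HasDerivAt.add, HasDerivAt.sub, HasDerivAt.mul, HasDerivAt.neg,
      hasDerivAt_id', hasDerivAt_const]) ?_
  ring

end PartialDerivatives

theorem HA_critical_point_relation (t : ℝ) (x y z : ℂ) (hH : HA t x y z = 0)
    (hx : deriv (fun w => HA t w y z) x = 0) (hy : deriv (fun w => HA t x w z) y = 0)
    (hz : deriv (fun w => HA t x y w) z = 0) :
    (t : ℂ) ^ 3 * z * ((64 * t ^ 4 - 3) * z ^ 4 - (15 - 56 * t ^ 2)) = 0 := by
  rw [(hasDerivAt_HA_x t x y z).deriv] at hx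
  rw [(hasDerivAt_HA_y t x y z).deriv] at hy
  rw [(hasDerivAt_HA_z t x y z).deriv] at hz
  unfold HA at hH
  generalize (t : ℂ) = τ at hH hx hy hz ⊢
  linear_combination
    ((4 * y - 4 * x + 4 * y * z^2 + 4 * x * z^2 - 320/9 * x * y^2 + 914/9 * x^2 * y
      - 1805/18 * y^3 * z^2 - 819/8 * x * y^2 * z^2 - 815/6 * x^2 * y * z^2 - 59/72 * x^3 * z^2)
      + (-12 * z^3 + 6037/24 * y^2 * z + 47869/144 * x * y * z + 33109/144 * x^2 * z
      - 2437/72 * y^2 * z^3 + 17671/144 * x * y * z^3 - 545/72 * x * y^3 * z + 2465/144 * x^2 * z^3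
      + 44023/144 * x^2 * y^2 * z - 12005/48 * x^3 * y * z - 943/24 * x * y^3 * z^3
      + 1595/144 * x^2 * y^2 * z^3 + 4063/144 * x^3 * y * z^3) * τ + (1247/18 * y - 133/9 * x
      - 2017/9 * y * z^2 - 1777/18 * x * z^2 - 1933/3 * x * y^2 - 6427/36 * x^2 * y
      + 1046/9 * y^3 * z^2 + 1927/18 * x * y^2 * z^2 + 4541/12 * x^2 * y * z^2 - 184/9 * x^3 * z^2
      + 3971/36 * x^3 * y^2 + 7673/18 * x^2 * y^3 * z^2 - 10561/36 * x^3 * y^2 * z^2) * τ^2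
      + (-346/3 * z - 21221/36 * y^2 * z - 113059/72 * x * y * z - 31435/72 * x^2 * z
      + 2555/4 * y^2 * z^3 + 1575/8 * x * y * z^3 - 1505/4 * x * y^3 * z + 1403/24 * x^2 * z^3
      + 10669/24 * x^2 * y^2 * z + 33529/72 * x^3 * y * z - 335/12 * x * y^3 * z^3
      + 841/24 * x^2 * y^2 * z^3 - 57/8 * x^3 * y * z^3) * τ^3 + (2687/6 * y - 1612/3 * x
      + 1509/2 * y * z^2 + 70 * x * z^2 - 93/2 * x * y^2 + 1669/6 * x^2 * y + 536/3 * y^3 * z^2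
      - 1189 * x * y^2 * z^2 + 6107/6 * x^2 * y * z^2 + 349/6 * x^3 * z^2 - 47/6 * x^3 * y^2
      + 449 * x^2 * y^3 * z^2 - 57/2 * x^3 * y^2 * z^2) * τ^4 + (28 * z - 40 * z^3 + 481/3 * y^2 * z
      + 1597/3 * x * y * z + 1204/3 * x^2 * z - 35 * y^2 * z^3 - 19 * x * y * z^3 + 7 * x * y^3 * z
      - 24 * x^2 * z^3 + 233 * x^2 * y^2 * z - 1828/3 * x^3 * y * z - 3 * x * y^3 * z^3
      - x^2 * y^2 * z^3 + 4 * x^3 * y * z^3) * τ^5 + (-144 * y * z^2 - 92 * x * z^2 - 20 * y^3 * z^2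
      - 128 * x * y^2 * z^2 + 88 * x^2 * y * z^2 - 28 * x^3 * z^2 - 28 * x^2 * y^3 * z^2
      + 16 * x^3 * y^2 * z^2) * τ^6) * hH +
    ((-2 * x * y + 2 * x^2 - 2 * x * y * z^2 + 1595/144 * x * y^3 - 2 * x^2 * z^2
      + 20597/144 * x^2 * y^2 - 1595/48 * x^3 * y - 5159/144 * x^4 - 12097/144 * x * y^3 * z^2
      + 2189/72 * x^2 * y^2 * z^2 + 4553/48 * x^3 * y * z^2 - 1001/72 * x^4 * z^2) + (17 * y * z
      + 85/18 * y^3 * z - 9 * x * z^3 - 5155/24 * x * y^2 * z - 10147/72 * x^2 * y * z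
      - 3707/144 * x^3 * z - 13/36 * x * y^2 * z^3 - 3185/72 * x^2 * y * z^3
      + 7673/72 * x^2 * y^3 * z + 315/16 * x^3 * z^3 - 5647/48 * x^3 * y^2 * z
      + 1001/36 * x^4 * y * z + 943/24 * x^2 * y^3 * z^3 + 2435/144 * x^3 * y^2 * z^3) * τ + (15/2
      + 3/2 * z^2 + 85/36 * y^2 + 743/48 * x * y + 405/16 * x^2 + 13/36 * y^2 * z^2
      + 21305/144 * x * y * z^2 - 1273/36 * x * y^3 + 8341/144 * x^2 * z^2 + 45317/144 * x^2 * y^2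
      + 8909/144 * x^3 * y + 285/4 * x^4 + 3661/36 * x * y^3 * z^2 + 22451/144 * x^2 * y^2 * z^2
      - 15299/144 * x^3 * y * z^2 + 409/12 * x^4 * z^2 - 3971/72 * x^4 * y^2
      - 5251/36 * x^3 * y^3 * z^2) * τ^2 + (-1034/9 * y * z - 5941/36 * x * z - 5513/18 * y^3 * z
      + 62/3 * x * z^3 - 191/2 * x * y^2 * z + 28429/36 * x^2 * y * z + 15551/72 * x^3 * z
      - 1927/4 * x * y^2 * z^3 - 2357/12 * x^2 * y * z^3 + 4381/36 * x^2 * y^3 * z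
      + 633/8 * x^3 * z^3 - 1991/8 * x^3 * y^2 * z - 1601/9 * x^4 * y * z + 335/12 * x^2 * y^3 * z^3
      + 171/8 * x^3 * y^2 * z^3) * τ^3 + (-28 - 62/3 * z^2 - 1781/12 * y^2 - 1689/4 * x * y
      + 219/4 * x^2 + 1927/4 * y^2 * z^2 - 1813/12 * x * y * z^2 + 1781/12 * x * y^3
      - 189 * x^2 * z^2 - 1237/12 * x^2 * y^2 - 391/3 * x^3 * y + 108 * x^4
      + 7049/12 * x * y^3 * z^2 + 963/2 * x^2 * y^2 * z^2 - 1214/3 * x^3 * y * z^2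
      - 491/4 * x^4 * z^2 + 47/12 * x^4 * y^2 - 841/6 * x^3 * y^3 * z^2) * τ^4 + (2713/3 * y * z
      + 587/3 * x * z + 1781/3 * y^3 * z + 34 * x * z^3 + 112 * x * y^2 * z - 4769/3 * x^2 * y * z
      - 599/3 * x^3 * z + 16 * x * y^2 * z^3 + 15 * x^2 * y * z^3 - 1802/3 * x^2 * y^3 * z
      + 14 * x^3 * z^3 - 112 * x^3 * y^2 * z + 2263/3 * x^4 * y * z + 3 * x^2 * y^3 * z^3
      - 12 * x^3 * y^2 * z^3) * τ^5 + (-22 * z^2 - 16 * y^2 * z^2 + 52 * x * y * z^2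
      + 16 * x^2 * z^2 - 4 * x * y^3 * z^2 + 16 * x^2 * y^2 * z^2 - 52 * x^3 * y * z^2
      + 6 * x^4 * z^2 + 4 * x^3 * y^3 * z^2) * τ^6) * hx +
    ((-2 * y^2 + 2 * x * y - 2 * y^2 * z^2 - 1595/144 * y^4 - 2 * x * y * z^2 - 5159/48 * x * y^3
      - 9839/144 * x^2 * y^2 + 5159/144 * x^3 * y + 781/144 * y^4 * z^2 + 265/18 * x * y^3 * z^2
      - 19855/144 * x^2 * y^2 * z^2 - 1531/36 * x^3 * y * z^2) + (-17 * x * z - 9 * y * z^3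
      - 4313/36 * y^3 * z - 5887/144 * x * y^2 * z - 409/8 * x^2 * y * z + 509/18 * x^3 * z
      + 821/24 * y^3 * z^3 - 3767/48 * x * y^2 * z^3 - 187/36 * x * y^4 * z
      - 1325/36 * x^2 * y * z^3 + 1153/24 * x^2 * y^3 * z + 18503/144 * x^3 * y^2 * z
      - 2015/72 * x^2 * y^3 * z^3 - 4063/144 * x^3 * y^2 * z^3) * τ + (15/2 - 3/2 * z^2
      - 4315/48 * y^2 - 2473/144 * x * y - 509/36 * x^2 + 35059/144 * y^2 * z^2 + 33 * y^4
      - 5465/144 * x * y * z^2 + 47807/144 * x * y^3 - 1325/36 * x^2 * z^2 + 18835/144 * x^2 * y^2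
      - 1537/18 * x^3 * y - 6379/144 * x * y^3 * z^2 + 8575/144 * x^2 * y^2 * z^2
      + 779/6 * x^3 * y * z^2 - 3971/72 * x^3 * y^3 + 914/9 * x^3 * y^3 * z^2) * τ^2
      + (11809/36 * y * z + 135 * x * z - 62/3 * y * z^3 + 9409/36 * y^3 * z
      + 10403/24 * x * y^2 * z - 55 * x^2 * y * z + 3011/18 * x^3 * z - 157 * y^3 * z^3
      - 11/24 * x * y^2 * z^3 - 1651/12 * x^2 * y * z^3 - 3841/72 * x^3 * y^2 * z
      - 677/12 * x^2 * y^3 * z^3 + 57/8 * x^3 * y^2 * z^3) * τ^3 + (-28 - 62/3 * z^2 - 146 * y^2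
      + 1028/3 * x * y - 1343/12 * x^2 - 721/3 * y^2 * z^2 + 673/12 * x * y * z^2 + 7/6 * x * y^3
      - 1651/12 * x^2 * z^2 - 431/12 * x^2 * y^2 - 2639/12 * x^3 * y + 3863/12 * x * y^3 * z^2
      - 619/12 * x^2 * y^2 * z^2 + 1343/6 * x^3 * y * z^2 + 47/12 * x^3 * y^3) * τ^4
      + (-278/3 * y * z - 4 * x * z + 54 * y * z^3 - 209/3 * y^3 * z + 16 * x * y^2 * z
      - 9 * x^2 * y * z - 1343/3 * x^3 * z + 19 * y^3 * z^3 + 4 * x * y^2 * z^3 + 10 * x^2 * y * z^3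
      - 1355/3 * x^3 * y^2 * z + 13 * x^2 * y^3 * z^3 - 4 * x^3 * y^2 * z^3) * τ^5 + (42 * z^2
      + 42 * y^2 * z^2 + 16 * x * y * z^2 + 10 * x^2 * z^2 + 16 * x * y^3 * z^2
      + 10 * x^2 * y^2 * z^2) * τ^6) * hy +
    ((1595/144 * y^3 * z + 5159/144 * x * y^2 * z + 1595/144 * x^2 * y * z + 5159/144 * x^3 * z
      + 6439/144 * y^3 * z^3 + 229/16 * x * y^2 * z^3 + 6439/144 * x^2 * y * z^3
      + 229/16 * x^3 * z^3) + (15/2 + 85/36 * y^2 - 509/36 * x^2 + 15/2 * z^4 + 2173/72 * y^2 * z^2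
      - 2189/36 * x * y * z^2 - 3859/72 * x^2 * z^2 - 1595/36 * x * y^3 * z^2
      - 754/9 * x^2 * y^2 * z^2 + 33 * x^3 * y * z^2) * τ + (101/16 * y * z - 1649/144 * x * z
      - 3793/144 * y * z^3 - 1103/36 * y^3 * z - 431/48 * x * z^3 - 19975/144 * x * y^2 * z
      - 7481/144 * x^2 * y * z - 514/9 * x^3 * z - 223/4 * y^3 * z^3 - 3773/48 * x * y^2 * z^3
      - 1763/16 * x^2 * y * z^3 - 38 * x^3 * z^3 + 3971/72 * x^3 * y^2 * z
      - 1211/18 * x^2 * y^3 * z^3 + 361/8 * x^3 * y^2 * z^3) * τ^2 + (-28 + 142/3 * z^2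
      - 1781/12 * y^2 - 1343/12 * x^2 + 142/3 * y^2 * z^2 + 2053/18 * x * y * z^2
      + 1103/9 * x * y^3 * z^2) * τ^3 + (69/4 * y * z + 1697/6 * x * z - 1033/12 * y * z^3
      - 1781/12 * y^3 * z + x * z^3 + 887/3 * x * y^2 * z - 482/3 * x^2 * y * z + 47/12 * x^3 * z
      - 951/4 * y^3 * z^3 - 59/2 * x * y^2 * z^3 - 238 * x^2 * y * z^3 - 73/4 * x^3 * z^3
      - 47/12 * x^3 * y^2 * z - 253/3 * x^2 * y^3 * z^3 + 57/4 * x^3 * y^2 * z^3) * τ^4 + (-9 * z^2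
      - 12 * z^4 - 9 * y^2 * z^2 + 1745/3 * x * y * z^2 + 1781/3 * x * y^3 * z^2) * τ^5
      + (30 * y * z^3 + 24 * x * z^3 + 10 * y^3 * z^3 + 32 * x * y^2 * z^3 - 2 * x^2 * y * z^3
      + 8 * x^3 * z^3 + 10 * x^2 * y^3 * z^3 - 8 * x^3 * y^2 * z^3) * τ^6) * hz

theorem abs_ne_of_lt_inv_sqrt_three (t : ℝ) (ht0 : 0 < t) (ht1 : t < 1 / Real.sqrt 3)
    (ht2 : t ≠ 1 / 2) : |64 * t ^ 4 - 3| ≠ |15 - 56 * t ^ 2| := by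
  have ht3 : t ^ 2 * 3 < 1 := by
    have h : t * Real.sqrt 3 < 1 := (lt_div_iff₀ (by positivity)).1 ht1
    calc t ^ 2 * 3 = (t * Real.sqrt 3) ^ 2 := by
          rw [mul_pow, Real.sq_sqrt (by norm_num : (0 : ℝ) ≤ 3)]
      _ < 1 := pow_lt_one₀ (by positivity) h two_ne_zero
  intro habs
  rcases abs_eq_abs.mp habs with h | h
  · have h' : (2 * t - 1) * ((2 * t + 1) * (8 * t ^ 2 + 9)) = 0 := by linear_combination h / 2
    rcases mul_eq_zero.mp h' with h'' | h''
    · exact ht2 (by linarith)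
    · exact (by positivity : (2 * t + 1) * (8 * t ^ 2 + 9) ≠ 0) h''
  · have h' : (3 - 8 * t ^ 2) * (1 - 2 * t ^ 2) = 0 := by linear_combination h / 4
    exact (mul_pos (by linarith) (by linarith)).ne' h'

theorem At_variety_smooth_on_torus_general (t : ℝ) (ht0 : 0 < t) (ht1 : t < 1 / Real.sqrt 3)
    (ht2 : t ≠ 1 / 2)
    (x y z : ℂ) (hz : ‖z‖ = 1)
    (hH : HA t x y z = 0) :
    ¬ (deriv (fun w => HA t w y z) x = 0 ∧ deriv (fun w => HA t x w z) y = 0 ∧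
        deriv (fun w => HA t x y w) z = 0) := by
  rintro ⟨hx, hy, hz'⟩
  have hrel := HA_critical_point_relation t x y z hH hx hy hz'
  have htz : (t : ℂ) ^ 3 * z ≠ 0 :=
    mul_ne_zero (pow_ne_zero 3 (by exact_mod_cast ht0.ne')) (norm_ne_zero_iff.mp (by simp [hz]))
  have hz4 : ((64 * t ^ 4 - 3 : ℝ) : ℂ) * z ^ 4 = ((15 - 56 * t ^ 2 : ℝ) : ℂ) := by
    push_cast
    exact sub_eq_zero.mp ((mul_eq_zero.mp hrel).resolve_left htz)
  apply abs_ne_of_lt_inv_sqrt_three t ht0 ht1 ht2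
  simpa only [norm_mul, norm_pow, hz, one_pow, mul_one, Complex.norm_real, Real.norm_eq_abs]
    using congrArg norm hz4

/-- for 0 < t < 1/√3 with t ≠ 1/2, the gradient of the A(t) denominator H
does not vanish at any point of the unit torus T₃ where H vanishes. -/
theorem At_variety_smooth_on_torus (t : ℝ) (ht0 : 0 < t) (ht1 : t < 1 / Real.sqrt 3)
    (ht2 : t ≠ 1 / 2)
    (x y z : ℂ) (hx : ‖x‖ = 1) (hy : ‖y‖ = 1) (hz : ‖z‖ = 1)
    (hH : HA t x y z = 0) :
    ¬ (deriv (fun w => HA t w y z) x = 0 ∧ deriv (fun w => HA t x w z) y = 0 ∧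
        deriv (fun w => HA t x y w) z = 0) :=
  At_variety_smooth_on_torus_general t ht0 ht1 ht2 x y z hz hH
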